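/- arXiv:2006.16023 — 2 statements merged into one kernel-verified Lean document; each statement's English description precedes it below -/
import Mathlib

section
/- Let f : ℝ × ℝᴺ × K → ℝᴺ and controls u_ε : [0,T] → K, ε ∈ (0, ε₀], be as in the previous estimate, and suppose u_ε differs from a fixed control u₀ only on a set of measure at most ε. If x_ε solves ẋ = f(t, x, u_ε(t)) with x_ε(0) = x₀(0) and x₀ solves the equation with control u₀, then x_ε converges uniformly to x₀ on [0,T] as ε → 0⁺. -/
/-!
Comparing both vector fields along `x₀`, the difference `x ε - x₀` satisfies
`‖x ε t - x₀ t‖ ≤ ∫₀ᵗ (L₀ ‖x ε s - x₀ s‖ + e_ε s) ds`, where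
`e_ε s = ‖f s (x₀ s) (u ε s) - f s (x₀ s) (u₀ s)‖` vanishes off the needle set
`{u ε ≠ u₀}` and is at most `2 M₀`, so that `∫₀ᵗ e_ε ≤ 2 M₀ ε`. Grönwall's inequality then gives
`‖x ε t - x₀ t‖ ≤ 2 M₀ ε exp (L₀ T)` on `[0, T]`.
-/

open Real Set MeasureTheory Filter Topology

theorem tendstoUniformlyOn_of_norm_sub_le {ι α E : Type*} [SeminormedAddCommGroup E]
    {F : ι → α → E} {f : α → E} {l : Filter ι} {s : Set α} {b : ι → ℝ}
    (hb : Tendsto b l (𝓝 0)) (h : ∀ᶠ i in l, ∀ x ∈ s, ‖F i x - f x‖ ≤ b i) :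
    TendstoUniformlyOn F f l s := by
  rw [Metric.tendstoUniformlyOn_iff]
  intro η hη
  filter_upwards [h, hb.eventually (gt_mem_nhds hη)] with i hi hbi x hx
  rw [dist_eq_norm']
  exact (hi x hx).trans_lt hbi

theorem add_mul_gronwallBound_zero (a L t : ℝ) :
    a + L * gronwallBound 0 L a t = a * exp (L * t) := by
  rcases eq_or_ne L 0 with rfl | hL
  · simp
  · rw [gronwallBound_of_K_ne_0 hL]
    field_simp
    ring

theorem le_mul_exp_of_le_add_mul_integral {v : ℝ → ℝ} {a L T : ℝ} (hv : Continuous v)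
    (hL : 0 ≤ L) (h : ∀ t ∈ Icc 0 T, v t ≤ a + L * ∫ s in (0:ℝ)..t, v s) :
    ∀ t ∈ Icc 0 T, v t ≤ a * exp (L * t) := by
  set V : ℝ → ℝ := fun t => ∫ s in (0:ℝ)..t, v s
  have hV : ∀ t, HasDerivAt V (v t) t := fun t =>
    intervalIntegral.integral_hasDerivAt_right (hv.intervalIntegrable 0 t)
      hv.stronglyMeasurable.stronglyMeasurableAtFilter hv.continuousAt
  have hVbound : ∀ t ∈ Icc 0 T, V t ≤ gronwallBound 0 L a (t - 0) :=
    le_gronwallBound_of_liminf_deriv_right_le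
      (fun t _ => (hV t).continuousAt.continuousWithinAt)
      (fun t _ _ hr => (hV t).hasDerivWithinAt.liminf_right_slope_le hr)
      (by simp [V]) (fun t ht => by linarith [h t (Ico_subset_Icc_self ht)])
  intro t ht
  calc v t ≤ a + L * V t := h t ht
    _ ≤ a + L * gronwallBound 0 L a t := by
      gcongr
      simpa using hVbound t ht
    _ = a * exp (L * t) := add_mul_gronwallBound_zero a L t

theorem norm_sub_le_mul_exp_of_integral_equations {E : Type*} [NormedAddCommGroup E]
    [NormedSpace ℝ E] {y z g h : ℝ → E} {e : ℝ → ℝ} {L δ T : ℝ} (hL : 0 ≤ L)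
    (hy : Continuous y) (hz : Continuous z) (hg : IntegrableOn g (Icc 0 T))
    (hh : IntegrableOn h (Icc 0 T)) (he : IntegrableOn e (Icc 0 T)) (h0 : y 0 = z 0)
    (hyeq : ∀ t ∈ Icc 0 T, y t = y 0 + ∫ s in (0:ℝ)..t, g s)
    (hzeq : ∀ t ∈ Icc 0 T, z t = z 0 + ∫ s in (0:ℝ)..t, h s)
    (hgh : ∀ s ∈ Icc 0 T, ‖g s - h s‖ ≤ L * ‖y s - z s‖ + e s)
    (heδ : ∀ t ∈ Icc 0 T, ∫ s in (0:ℝ)..t, e s ≤ δ) :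
    ∀ t ∈ Icc 0 T, ‖y t - z t‖ ≤ δ * exp (L * t) := by
  have hv : Continuous fun s => ‖y s - z s‖ := (hy.sub hz).norm
  refine le_mul_exp_of_le_add_mul_integral hv hL fun t ht => ?_
  have hsub : Icc 0 t ⊆ Icc 0 T := Icc_subset_Icc_right ht.2
  have hint : ∀ {φ : ℝ → E}, IntegrableOn φ (Icc 0 T) → IntervalIntegrable φ volume 0 t :=
    fun hφ => (hφ.mono_set (uIcc_of_le ht.1 ▸ hsub)).intervalIntegrable
  have hLv : IntervalIntegrable (fun s => L * ‖y s - z s‖) volume 0 t :=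
    (continuous_const.mul hv).intervalIntegrable 0 t
  have he' : IntervalIntegrable e volume 0 t :=
    (he.mono_set (uIcc_of_le ht.1 ▸ hsub)).intervalIntegrable
  calc ‖y t - z t‖ = ‖∫ s in (0:ℝ)..t, (g s - h s)‖ := by
        rw [intervalIntegral.integral_sub (hint hg) (hint hh), hyeq t ht, hzeq t ht, h0]
        abel_nf
    _ ≤ ∫ s in (0:ℝ)..t, ‖g s - h s‖ := intervalIntegral.norm_integral_le_integral_norm ht.1
    _ ≤ ∫ s in (0:ℝ)..t, (L * ‖y s - z s‖ + e s) :=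
        intervalIntegral.integral_mono_on ht.1 ((hint hg).sub (hint hh)).norm (hLv.add he')
          fun s hs => hgh s (hsub hs)
    _ = L * (∫ s in (0:ℝ)..t, ‖y s - z s‖) + ∫ s in (0:ℝ)..t, e s := by
        rw [intervalIntegral.integral_add hLv he', intervalIntegral.integral_const_mul]
    _ ≤ δ + L * ∫ s in (0:ℝ)..t, ‖y s - z s‖ := by linarith [heδ t ht]

theorem intervalIntegral_le_mul_of_le_indicator {k : ℝ → ℝ} {S : Set ℝ} {C δ t : ℝ}
    (ht : 0 ≤ t) (hC : 0 ≤ C) (hδ : 0 ≤ δ) (hS : volume S ≤ ENNReal.ofReal δ)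
    (hk : IntervalIntegrable k volume 0 t)
    (hkS : ∀ s ∈ Ioc 0 t, k s ≤ S.indicator (fun _ => C) s) :
    ∫ s in (0:ℝ)..t, k s ≤ C * δ := by
  set S' := toMeasurable volume S
  have hS' : MeasurableSet S' := measurableSet_toMeasurable _ _
  have hkS' : ∀ s ∈ Ioc 0 t, k s ≤ S'.indicator (fun _ => C) s := fun s hs =>
    (hkS s hs).trans
      (indicator_le_indicator_of_subset (subset_toMeasurable _ _) (fun _ => hC) s)
  rw [intervalIntegral.integral_of_le ht]
  calc ∫ s in Ioc 0 t, k s ≤ ∫ s in Ioc 0 t, S'.indicator (fun _ => C) s :=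
        setIntegral_mono_on hk.1 ((integrableOn_const measure_Ioc_lt_top.ne).indicator hS')
          measurableSet_Ioc hkS'
    _ = volume.real (Ioc 0 t ∩ S') * C := by
        rw [setIntegral_indicator hS', setIntegral_const, smul_eq_mul]
    _ ≤ δ * C := by
        gcongr
        refine ENNReal.toReal_le_of_le_ofReal hδ ?_
        calc volume (Ioc 0 t ∩ S') ≤ volume S' := measure_mono inter_subset_right
          _ = volume S := measure_toMeasurable S
          _ ≤ ENNReal.ofReal δ := hS
    _ = C * δ := mul_comm δ C

section ControlSystem

variable {E U : Type*} [NormedAddCommGroup E] [MeasurableSpace E] [BorelSpace E]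
  [SecondCountableTopology E] [TopologicalSpace U] [MeasurableSpace U] [BorelSpace U]
  [SecondCountableTopology U] {f : ℝ → E → U → E} {K : Set U} {M₀ : ℝ}

theorem integrableOn_Icc_of_controlled_field
    (hcont : Continuous fun q : ℝ × E × U => f q.1 q.2.1 q.2.2)
    (hbd : ∀ t x u, u ∈ K → ‖f t x u‖ ≤ M₀) {x : ℝ → E} {u : ℝ → U} (hx : Continuous x)
    (hu : Measurable u) (huK : ∀ t, u t ∈ K) (a b : ℝ) :
    IntegrableOn (fun s => f s (x s) (u s)) (Icc a b) :=
  IntegrableOn.of_bound measure_Icc_lt_top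
    (hcont.measurable.comp (measurable_id.prodMk (hx.measurable.prodMk hu))).aestronglyMeasurable
    M₀ (ae_of_all _ fun s => hbd s _ _ (huK s))

theorem intervalIntegral_norm_sub_le_of_volume_ne_le
    (hcont : Continuous fun q : ℝ × E × U => f q.1 q.2.1 q.2.2)
    (hbd : ∀ t x u, u ∈ K → ‖f t x u‖ ≤ M₀) {x : ℝ → E} {v w : ℝ → U} (hx : Continuous x)
    (hv : Measurable v) (hw : Measurable w) (hvK : ∀ t, v t ∈ K) (hwK : ∀ t, w t ∈ K)
    {T δ : ℝ} (hδ : 0 ≤ δ)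
    (hvw : volume {t : ℝ | t ∈ Icc (0:ℝ) T ∧ v t ≠ w t} ≤ ENNReal.ofReal δ) :
    ∀ t ∈ Icc 0 T, ∫ s in (0:ℝ)..t, ‖f s (x s) (v s) - f s (x s) (w s)‖ ≤ 2 * M₀ * δ := by
  intro t ht
  have hM₀ : 0 ≤ M₀ := (norm_nonneg _).trans (hbd 0 (x 0) (w 0) (hwK 0))
  have hint : ∀ {u : ℝ → U}, Measurable u → (∀ t, u t ∈ K) →
      IntervalIntegrable (fun s => f s (x s) (u s)) volume 0 t := fun hu huK =>
    (intervalIntegrable_iff_integrableOn_Icc_of_le ht.1).2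
      (integrableOn_Icc_of_controlled_field hcont hbd hx hu huK 0 t)
  refine intervalIntegral_le_mul_of_le_indicator ht.1 (by positivity) hδ hvw
    ((hint hv hvK).sub (hint hw hwK)).norm fun s hs => ?_
  by_cases hs' : v s = w s
  · simp [hs']
  · have hsS : s ∈ {t : ℝ | t ∈ Icc (0:ℝ) T ∧ v t ≠ w t} := ⟨⟨hs.1.le, hs.2.trans ht.2⟩, hs'⟩
    rw [indicator_of_mem hsS]
    calc ‖f s (x s) (v s) - f s (x s) (w s)‖
        ≤ ‖f s (x s) (v s)‖ + ‖f s (x s) (w s)‖ := norm_sub_le _ _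
      _ ≤ M₀ + M₀ := add_le_add (hbd _ _ _ (hvK s)) (hbd _ _ _ (hwK s))
      _ = 2 * M₀ := by ring

end ControlSystem

theorem needle_trajectories_converge_general (N M : ℕ) (T : ℝ)
    (K : Set (Fin M → ℝ))
    (f : ℝ → EuclideanSpace ℝ (Fin N) → (Fin M → ℝ) → EuclideanSpace ℝ (Fin N))
    (L₀ : NNReal) (M₀ : ℝ)
    (hcont : Continuous fun q : ℝ × EuclideanSpace ℝ (Fin N) × (Fin M → ℝ) =>
      f q.1 q.2.1 q.2.2)
    (hlip : ∀ t u, u ∈ K → LipschitzWith L₀ (fun x => f t x u))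
    (hbd : ∀ t x u, u ∈ K → ‖f t x u‖ ≤ M₀)
    (ε₀ : ℝ)
    (u : ℝ → ℝ → Fin M → ℝ) (u₀ : ℝ → Fin M → ℝ)
    (hu : ∀ ε ∈ Ioc (0:ℝ) ε₀, Measurable (u ε)) (hu₀ : Measurable u₀)
    (huK : ∀ ε ∈ Ioc (0:ℝ) ε₀, ∀ t, u ε t ∈ K) (hu₀K : ∀ t, u₀ t ∈ K)
    (hsmall : ∀ ε ∈ Ioc (0:ℝ) ε₀,
      volume {t : ℝ | t ∈ Icc (0:ℝ) T ∧ u ε t ≠ u₀ t} ≤ ENNReal.ofReal ε)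
    (x : ℝ → ℝ → EuclideanSpace ℝ (Fin N)) (x₀ : ℝ → EuclideanSpace ℝ (Fin N))
    (hxc : ∀ ε ∈ Ioc (0:ℝ) ε₀, Continuous (x ε)) (hx₀c : Continuous x₀)
    (hinit : ∀ ε ∈ Ioc (0:ℝ) ε₀, x ε 0 = x₀ 0)
    (hxeq : ∀ ε ∈ Ioc (0:ℝ) ε₀, ∀ t ∈ Icc (0:ℝ) T,
      x ε t = x ε 0 + ∫ s in (0:ℝ)..t, f s (x ε s) (u ε s))
    (hx₀eq : ∀ t ∈ Icc (0:ℝ) T, x₀ t = x₀ 0 + ∫ s in (0:ℝ)..t, f s (x₀ s) (u₀ s)) :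
    TendstoUniformlyOn x x₀ (nhdsWithin 0 (Ioc (0:ℝ) ε₀)) (Icc (0:ℝ) T) := by
  have hM₀ : 0 ≤ M₀ := (norm_nonneg _).trans (hbd 0 0 (u₀ 0) (hu₀K 0))
  have hC := (continuous_const_mul (2 * M₀ * exp (L₀ * T))).tendsto' 0 0 (mul_zero _)
  refine tendstoUniformlyOn_of_norm_sub_le (hC.mono_left nhdsWithin_le_nhds) ?_
  filter_upwards [self_mem_nhdsWithin] with ε hε t ht
  have hfield {y : ℝ → EuclideanSpace ℝ (Fin N)} {v : ℝ → Fin M → ℝ} (hy : Continuous y)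
      (hv : Measurable v) (hvK : ∀ t, v t ∈ K) :=
    integrableOn_Icc_of_controlled_field hcont hbd hy hv hvK 0 T
  have hgap : ∀ s ∈ Icc 0 T, ‖f s (x ε s) (u ε s) - f s (x₀ s) (u₀ s)‖
      ≤ L₀ * ‖x ε s - x₀ s‖ + ‖f s (x₀ s) (u ε s) - f s (x₀ s) (u₀ s)‖ := fun s _ =>
    calc ‖f s (x ε s) (u ε s) - f s (x₀ s) (u₀ s)‖
        ≤ ‖f s (x ε s) (u ε s) - f s (x₀ s) (u ε s)‖
          + ‖f s (x₀ s) (u ε s) - f s (x₀ s) (u₀ s)‖ := norm_sub_le_norm_sub_add_norm_sub _ _ _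
      _ ≤ L₀ * ‖x ε s - x₀ s‖ + ‖f s (x₀ s) (u ε s) - f s (x₀ s) (u₀ s)‖ := by
        gcongr
        simpa [dist_eq_norm] using (hlip s _ (huK ε hε s)).dist_le_mul (x ε s) (x₀ s)
  calc ‖x ε t - x₀ t‖ ≤ 2 * M₀ * ε * exp (L₀ * t) :=
        norm_sub_le_mul_exp_of_integral_equations L₀.coe_nonneg (hxc ε hε) hx₀c
          (hfield (hxc ε hε) (hu ε hε) (huK ε hε)) (hfield hx₀c hu₀ hu₀K)
          ((hfield hx₀c (hu ε hε) (huK ε hε)).sub (hfield hx₀c hu₀ hu₀K)).norm (hinit ε hε)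
          (hxeq ε hε) hx₀eq hgap
          (intervalIntegral_norm_sub_le_of_volume_ne_le hcont hbd hx₀c (hu ε hε) hu₀
            (huK ε hε) hu₀K hε.1.le (hsmall ε hε)) t ht
    _ ≤ 2 * M₀ * exp (L₀ * T) * ε := by
      rw [mul_right_comm]
      gcongr
      exacts [hε.1.le, ht.2]

/-- Convergence of needle-modified trajectories (Lemma 7.3): if the controls `u ε` differ
from `u₀` only on sets of measure at most `ε`, then the corresponding solutions converge
uniformly on `[0,T]` to the solution with control `u₀` as `ε → 0⁺`. -/
theorem needle_trajectories_converge (N M : ℕ) (T : ℝ) (hT : 0 < T)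
    (K : Set (Fin M → ℝ)) (hK : IsCompact K)
    (f : ℝ → EuclideanSpace ℝ (Fin N) → (Fin M → ℝ) → EuclideanSpace ℝ (Fin N))
    (L₀ : NNReal) (M₀ : ℝ)
    (hcont : Continuous fun q : ℝ × EuclideanSpace ℝ (Fin N) × (Fin M → ℝ) =>
      f q.1 q.2.1 q.2.2)
    (hlip : ∀ t u, u ∈ K → LipschitzWith L₀ (fun x => f t x u))
    (hbd : ∀ t x u, u ∈ K → ‖f t x u‖ ≤ M₀)
    (ε₀ : ℝ) (hε₀ : 0 < ε₀)
    (u : ℝ → ℝ → Fin M → ℝ) (u₀ : ℝ → Fin M → ℝ)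
    (hu : ∀ ε ∈ Ioc (0:ℝ) ε₀, Measurable (u ε)) (hu₀ : Measurable u₀)
    (huK : ∀ ε ∈ Ioc (0:ℝ) ε₀, ∀ t, u ε t ∈ K) (hu₀K : ∀ t, u₀ t ∈ K)
    (hsmall : ∀ ε ∈ Ioc (0:ℝ) ε₀,
      volume {t : ℝ | t ∈ Icc (0:ℝ) T ∧ u ε t ≠ u₀ t} ≤ ENNReal.ofReal ε)
    (x : ℝ → ℝ → EuclideanSpace ℝ (Fin N)) (x₀ : ℝ → EuclideanSpace ℝ (Fin N))
    (hxc : ∀ ε ∈ Ioc (0:ℝ) ε₀, Continuous (x ε)) (hx₀c : Continuous x₀)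
    (hinit : ∀ ε ∈ Ioc (0:ℝ) ε₀, x ε 0 = x₀ 0)
    (hxeq : ∀ ε ∈ Ioc (0:ℝ) ε₀, ∀ t ∈ Icc (0:ℝ) T,
      x ε t = x ε 0 + ∫ s in (0:ℝ)..t, f s (x ε s) (u ε s))
    (hx₀eq : ∀ t ∈ Icc (0:ℝ) T, x₀ t = x₀ 0 + ∫ s in (0:ℝ)..t, f s (x₀ s) (u₀ s)) :
    TendstoUniformlyOn x x₀ (nhdsWithin 0 (Ioc (0:ℝ) ε₀)) (Icc (0:ℝ) T) :=
  needle_trajectories_converge_general N M T K f L₀ M₀ hcont hlip hbd ε₀ u u₀ hu hu₀ huK hu₀K hsmall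
    x x₀ hxc hx₀c hinit hxeq hx₀eq
end

section
/- For T > 0, ω = π/(2T), and prescribed real numbers a, b, the unique solution of h'''' = ω⁴ h on [0,T] with h(0) = 0, h'(0) = 0, h'(T) = a, h''(T) = b has coefficients (A,B,C,D) in the representation h(t) = A e^{ωt} + B e^{−ωt} + C cos(ωt) + D sin(ωt) given by (A,B,C,D)ᵀ = 𝒜⁻¹ (0, 0, a, b)ᵀ, where 𝒜 is the matrix with rows (1,1,1,0), (ω,−ω,0,ω), (ω e^{π/2}, −ω e^{−π/2}, −ω, 0), (ω² e^{π/2}, ω² e^{−π/2}, 0, −ω²). -/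
/-!
The jet `(h, h', h'', h''')` solves a linear first-order system with constant coefficients, so by
Grönwall uniqueness it coincides on `[0, T]` with the jet of the combination of `e^{ωt}`,
`e^{-ωt}`, `cos ωt`, `sin ωt` having the same initial jet. Since `ωT = π/2`, the four boundary
conditions evaluated on that combination are the rows of `𝒜` applied to its coefficient vector,
and `det 𝒜 = 2ω⁴(e^{-π/2} - e^{π/2}) ≠ 0`.
-/

open Real Set

/-- The boundary-condition matrix `𝒜` of Section 5.1, with `ω = π/(2T)`. -/
noncomputable def boundaryMatrix (T : ℝ) : Matrix (Fin 4) (Fin 4) ℝ :=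
  !![(1:ℝ), 1, 1, 0;
    π/(2*T), -(π/(2*T)), 0, π/(2*T);
    (π/(2*T)) * Real.exp (π/2), -((π/(2*T)) * Real.exp (-(π/2))), -(π/(2*T)), 0;
    (π/(2*T))^2 * Real.exp (π/2), (π/(2*T))^2 * Real.exp (-(π/2)), 0, -((π/(2*T))^2)]

open scoped Matrix

section LinearODE

variable {E : Type*} [NormedAddCommGroup E] [NormedSpace ℝ E]

theorem linearODE_solution_unique_of_mem_Icc_right (L : E →L[ℝ] E) {Y Z : ℝ → E} {a b : ℝ}
    (hY : ∀ t ∈ Icc a b, HasDerivAt Y (L (Y t)) t)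
    (hZ : ∀ t ∈ Icc a b, HasDerivAt Z (L (Z t)) t) (ha : Y a = Z a) :
    EqOn Y Z (Icc a b) :=
  ODE_solution_unique_of_mem_Icc_right (v := fun _ => L) (s := fun _ => univ)
    (fun _ _ => L.lipschitz.lipschitzOnWith)
    (fun t ht => (hY t ht).continuousAt.continuousWithinAt)
    (fun t ht => (hY t (Ico_subset_Icc_self ht)).hasDerivWithinAt) (fun _ _ => trivial)
    (fun t ht => (hZ t ht).continuousAt.continuousWithinAt)
    (fun t ht => (hZ t (Ico_subset_Icc_self ht)).hasDerivWithinAt) (fun _ _ => trivial) ha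

end LinearODE

noncomputable def jet (n : ℕ) (f : ℝ → ℝ) (t : ℝ) : Fin n → ℝ := fun i => iteratedDeriv i f t

theorem hasDerivAt_jet {n : ℕ} {f : ℝ → ℝ} (hf : ContDiff ℝ n f) (t : ℝ) :
    HasDerivAt (jet n f) (fun i => iteratedDeriv (i + 1) f t) t :=
  hasDerivAt_pi.2 fun i => by
    rw [iteratedDeriv_succ]
    exact ((hf.differentiable_iteratedDeriv i (by exact_mod_cast i.2)) t).hasDerivAt

def companion {n : ℕ} (a : Fin n → ℝ) : (Fin n → ℝ) →ₗ[ℝ] (Fin n → ℝ) where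
  toFun y i := if h : (i : ℕ) + 1 < n then y ⟨i + 1, h⟩ else ∑ j, a j * y j
  map_add' y z := by
    ext i
    split_ifs <;> simp [mul_add, Finset.sum_add_distrib, *]
  map_smul' r y := by
    ext i
    split_ifs <;> simp [Finset.mul_sum, mul_left_comm, *]

theorem hasDerivAt_jet_companion {n : ℕ} (a : Fin n → ℝ) {f : ℝ → ℝ} (hf : ContDiff ℝ n f)
    {t : ℝ} (hode : iteratedDeriv n f t = ∑ i, a i * iteratedDeriv i f t) :
    HasDerivAt (jet n f) (companion a (jet n f t)) t := by
  convert hasDerivAt_jet hf t using 1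
  ext i
  by_cases h : (i : ℕ) + 1 < n
  · simp [companion, jet, h]
  · have : (i : ℕ) + 1 = n := by omega
    simp [companion, jet, this, hode]

theorem eqOn_jet_of_linearODE {n : ℕ} (a : Fin n → ℝ) {f g : ℝ → ℝ} {S : ℝ}
    (hf : ContDiff ℝ n f) (hg : ContDiff ℝ n g)
    (hfode : ∀ t ∈ Icc 0 S, iteratedDeriv n f t = ∑ i, a i * iteratedDeriv i f t)
    (hgode : ∀ t ∈ Icc 0 S, iteratedDeriv n g t = ∑ i, a i * iteratedDeriv i g t)
    (h0 : jet n f 0 = jet n g 0) :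
    EqOn (jet n f) (jet n g) (Icc 0 S) :=
  linearODE_solution_unique_of_mem_Icc_right (LinearMap.toContinuousLinearMap (companion a))
    (fun t ht => hasDerivAt_jet_companion a hf (hfode t ht))
    (fun t ht => hasDerivAt_jet_companion a hg (hgode t ht)) h0

noncomputable def expTrigComb (ω : ℝ) (c : Fin 4 → ℝ) (t : ℝ) : ℝ :=
  c 0 * exp (ω * t) + c 1 * exp (-(ω * t)) + c 2 * cos (ω * t) + c 3 * sin (ω * t)

def derivCoeffs (ω : ℝ) (c : Fin 4 → ℝ) : Fin 4 → ℝ :=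
  ![ω * c 0, -(ω * c 1), ω * c 3, -(ω * c 2)]

theorem contDiff_expTrigComb (ω : ℝ) (c : Fin 4 → ℝ) {n : WithTop ℕ∞} :
    ContDiff ℝ n (expTrigComb ω c) := by
  unfold expTrigComb; fun_prop

theorem expTrigComb_smul (ω r : ℝ) (c : Fin 4 → ℝ) (t : ℝ) :
    expTrigComb ω (r • c) t = r * expTrigComb ω c t := by
  simp only [expTrigComb, Pi.smul_apply, smul_eq_mul]; ring

theorem hasDerivAt_expTrigComb (ω : ℝ) (c : Fin 4 → ℝ) (t : ℝ) :
    HasDerivAt (expTrigComb ω c) (expTrigComb ω (derivCoeffs ω c) t) t := by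
  have hlin : HasDerivAt (fun s => ω * s) ω t := by simpa using (hasDerivAt_id t).const_mul ω
  have hneg : HasDerivAt (fun s => -(ω * s)) (-ω) t := hlin.neg
  refine ((((hlin.exp.const_mul (c 0)).add (hneg.exp.const_mul (c 1))).add
    (hlin.cos.const_mul (c 2))).add (hlin.sin.const_mul (c 3))).congr_deriv ?_
  simp only [expTrigComb, derivCoeffs, Matrix.cons_val]
  ring

theorem iteratedDeriv_expTrigComb (ω : ℝ) (k : ℕ) (c : Fin 4 → ℝ) :
    iteratedDeriv k (expTrigComb ω c) = expTrigComb ω ((derivCoeffs ω)^[k] c) := by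
  induction k generalizing c with
  | zero => simp
  | succ k ih =>
    rw [iteratedDeriv_succ', Function.iterate_succ_apply, ← ih]
    congr 1
    exact funext fun t => (hasDerivAt_expTrigComb ω c t).deriv

theorem derivCoeffs_iterate_four (ω : ℝ) (c : Fin 4 → ℝ) :
    (derivCoeffs ω)^[4] c = ω ^ 4 • c := by
  ext i; fin_cases i <;> simp [derivCoeffs] <;> ring

theorem iteratedDeriv_four_expTrigComb (ω : ℝ) (c : Fin 4 → ℝ) (t : ℝ) :
    iteratedDeriv 4 (expTrigComb ω c) t = ω ^ 4 * expTrigComb ω c t := by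
  rw [iteratedDeriv_expTrigComb, derivCoeffs_iterate_four, expTrigComb_smul]

/-- The witness inverts the Wronskian of `e^{ωt}, e^{-ωt}, cos ωt, sin ωt` at `0`. -/
theorem exists_jet_expTrigComb_eq {ω : ℝ} (hω : ω ≠ 0) (y : Fin 4 → ℝ) :
    ∃ c, jet 4 (expTrigComb ω c) 0 = y := by
  refine ⟨![(y 0 + y 1 / ω + y 2 / ω ^ 2 + y 3 / ω ^ 3) / 4,
    (y 0 - y 1 / ω + y 2 / ω ^ 2 - y 3 / ω ^ 3) / 4, (y 0 - y 2 / ω ^ 2) / 2,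
    (y 1 / ω - y 3 / ω ^ 3) / 2], ?_⟩
  ext i
  fin_cases i <;> simp only [jet, iteratedDeriv_expTrigComb] <;>
    simp [expTrigComb, derivCoeffs] <;> field_simp <;> ring

theorem exists_expTrigComb_of_fourth_order {ω S : ℝ} (hω : ω ≠ 0) {f : ℝ → ℝ}
    (hf : ContDiff ℝ 4 f) (hode : ∀ t ∈ Icc 0 S, iteratedDeriv 4 f t = ω ^ 4 * f t) :
    ∃ c, EqOn (jet 4 f) (jet 4 (expTrigComb ω c)) (Icc 0 S) := by
  obtain ⟨c, hc⟩ := exists_jet_expTrigComb_eq hω (jet 4 f 0)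
  refine ⟨c, eqOn_jet_of_linearODE ![ω ^ 4, 0, 0, 0] hf (contDiff_expTrigComb ω c) ?_ ?_ hc.symm⟩
  · intro t ht; simp [Fin.sum_univ_four, hode t ht]
  · intro t _; simp [Fin.sum_univ_four, iteratedDeriv_four_expTrigComb]

theorem boundaryMatrix_mulVec {T : ℝ} (hT : T ≠ 0) (c : Fin 4 → ℝ) :
    boundaryMatrix T *ᵥ c =
      ![jet 4 (expTrigComb (π / (2 * T)) c) 0 0, jet 4 (expTrigComb (π / (2 * T)) c) 0 1,
        jet 4 (expTrigComb (π / (2 * T)) c) T 1, jet 4 (expTrigComb (π / (2 * T)) c) T 2] := by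
  have hωT : π / (2 * T) * T = π / 2 := by field_simp
  ext i
  fin_cases i <;> simp only [jet, iteratedDeriv_expTrigComb, expTrigComb, hωT] <;>
    simp [boundaryMatrix, Matrix.mulVec, dotProduct, Fin.sum_univ_four, derivCoeffs] <;> ring

theorem boundaryMatrix_det (T : ℝ) :
    (boundaryMatrix T).det = 2 * (π / (2 * T)) ^ 4 * (exp (-(π / 2)) - exp (π / 2)) := by
  have hexp : exp (π / 2) * exp (-(π / 2)) = 1 := by rw [← exp_add]; simp
  simp [boundaryMatrix, Matrix.det_succ_row_zero, Fin.sum_univ_succ, Fin.succAbove]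
  linear_combination (2 * (π / (2 * T)) ^ 4) * hexp

theorem isUnit_boundaryMatrix_det {T : ℝ} (hT : T ≠ 0) : IsUnit (boundaryMatrix T).det := by
  rw [boundaryMatrix_det, isUnit_iff_ne_zero]
  have hexp : exp (-(π / 2)) ≠ exp (π / 2) := by
    rw [Ne, exp_eq_exp]; linarith [pi_pos]
  exact mul_ne_zero (by positivity) (sub_ne_zero.2 hexp)

/-- For `T > 0`, `ω = π/(2T)` and prescribed `a, b`, the solution of `h'''' = ω⁴ h` on
`[0,T]` with `h(0) = 0`, `h'(0) = 0`, `h'(T) = a`, `h''(T) = b` has coefficients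
`(A,B,C,D)ᵀ = 𝒜⁻¹ (0,0,a,b)ᵀ` in the representation
`h(t) = A e^{ωt} + B e^{-ωt} + C cos(ωt) + D sin(ωt)`. -/
theorem fourth_order_bvp_coefficients (T a b : ℝ) (hT : 0 < T) (h : ℝ → ℝ)
    (hsm : ContDiff ℝ 4 h)
    (hode : ∀ t ∈ Icc (0:ℝ) T, iteratedDeriv 4 h t = (π/(2*T))^4 * h t)
    (h0 : h 0 = 0) (h0' : deriv h 0 = 0)
    (hTa : deriv h T = a) (hTb : iteratedDeriv 2 h T = b) :
    ∀ t ∈ Icc (0:ℝ) T,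
      h t = (boundaryMatrix T)⁻¹.mulVec ![0, 0, a, b] 0 * Real.exp (π/(2*T) * t)
        + (boundaryMatrix T)⁻¹.mulVec ![0, 0, a, b] 1 * Real.exp (-(π/(2*T) * t))
        + (boundaryMatrix T)⁻¹.mulVec ![0, 0, a, b] 2 * Real.cos (π/(2*T) * t)
        + (boundaryMatrix T)⁻¹.mulVec ![0, 0, a, b] 3 * Real.sin (π/(2*T) * t) := by
  obtain ⟨c, hc⟩ := exists_expTrigComb_of_fourth_order (by positivity) hsm hode
  have hbc : boundaryMatrix T *ᵥ c = ![0, 0, a, b] := by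
    rw [boundaryMatrix_mulVec hT.ne', ← hc ⟨le_rfl, hT.le⟩, ← hc ⟨hT.le, le_rfl⟩]
    simp [jet, h0, h0', hTa, hTb]
  have hcoeff : (boundaryMatrix T)⁻¹ *ᵥ ![0, 0, a, b] = c := by
    rw [← hbc, Matrix.mulVec_mulVec, Matrix.nonsing_inv_mul _ (isUnit_boundaryMatrix_det hT.ne'),
      Matrix.one_mulVec]
  intro t ht
  rw [hcoeff]
  simpa [jet, expTrigComb] using congrFun (hc ht) 0
end
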